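/- Let L > 1, let n ≥ 1 be an integer, and let C > 0, α > 0. Let t₀, t₁, …, t_n : Λ × Λ → ℂ be measurable with |t_i(x,x')| ≤ C e^{−α|x−x'|} for all (x,x') ∈ Λ × Λ and each i. Define F : ℝ → ℂ by F(u) := ∫_Λ dx ∫_Λ dy₁ ⋯ ∫_Λ dy_n e^{i u · fl_n(x,y₁,…,y_n)} t₀(x,y₁) t₁(y₁,y₂) ⋯ t_n(y_n,x). Then F is infinitely differentiable on ℝ; for every integer m ≥ 0 its m-th derivative is F^{(m)}(u) = ∫_Λ dx ∫_Λ dy₁ ⋯ ∫_Λ dy_n (i fl_n(x,y₁,…,y_n))^m e^{i u · fl_n(x,y₁,…,y_n)} t₀(x,y₁) ⋯ t_n(y_n,x); and there exists a constant K_m > 0 depending only on C, α, m and n such that sup_{u∈ℝ} |F^{(m)}(u)| ≤ K_m L³. -/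

import Mathlib

open MeasureTheory Real

noncomputable section

/-- The open cube `Λ = (−L/2, L/2)³ ⊂ ℝ³`. -/
def cube (L : ℝ) : Set (EuclideanSpace ℝ (Fin 3)) :=
  {x | ∀ i, x i ∈ Set.Ioo (-(L / 2)) (L / 2)}

/-- The magnetic phase `φ(x,x') = (x₂x₁' − x₁x₂')/2`. -/
def phi (x x' : EuclideanSpace ℝ (Fin 3)) : ℝ := (x 1 * x' 0 - x 0 * x' 1) / 2

/-- The closed-polygon phase sum `fl_{n+1}(x,y₁,…,y_{n+1})`, where the `n+1`
points `y₁,…,y_{n+1}` are encoded as `y : Fin (n+1) → ℝ³`. -/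
def fln (n : ℕ) (x : EuclideanSpace ℝ (Fin 3))
    (y : Fin (n + 1) → EuclideanSpace ℝ (Fin 3)) : ℝ :=
  phi x (y 0) + (∑ k : Fin n, phi (y k.castSucc) (y k.succ)) + phi (y (Fin.last n)) x

/-- The product of kernels `t₀(x,y₁) t₁(y₁,y₂) ⋯ t_{n+1}(y_{n+1},x)`. -/
def kernelProd (n : ℕ)
    (t : Fin (n + 2) → EuclideanSpace ℝ (Fin 3) → EuclideanSpace ℝ (Fin 3) → ℂ)
    (x : EuclideanSpace ℝ (Fin 3)) (y : Fin (n + 1) → EuclideanSpace ℝ (Fin 3)) : ℂ :=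
  t 0 x (y 0) * (∏ k : Fin n, t k.succ.castSucc (y k.castSucc) (y k.succ)) *
    t (Fin.last (n + 1)) (y (Fin.last n)) x

/-- `F(u) = ∫_Λ dx ∫_{Λ^{n+1}} dy e^{iu fl_{n+1}(x,y)} t₀(x,y₁) ⋯ t_{n+1}(y_{n+1},x)`. -/
def F (L : ℝ) (n : ℕ)
    (t : Fin (n + 2) → EuclideanSpace ℝ (Fin 3) → EuclideanSpace ℝ (Fin 3) → ℂ)
    (u : ℝ) : ℂ :=
  ∫ x in cube L, ∫ y in Set.pi Set.univ (fun _ : Fin (n + 1) => cube L),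
    Complex.exp (Complex.I * (u : ℂ) * (fln n x y : ℝ)) * kernelProd n t x y

abbrev EV : Type := EuclideanSpace ℝ (Fin 3)

namespace FAux
open scoped ENNReal NNReal

lemma abs_coord_le_norm (a : EV) (i : Fin 3) : |a i| ≤ ‖a‖ := by
  rw [EuclideanSpace.norm_eq]
  have h1 : |a i| = Real.sqrt (‖a i‖ ^ 2) := by
    rw [Real.norm_eq_abs, Real.sqrt_sq_eq_abs, abs_abs]
  rw [h1]
  apply Real.sqrt_le_sqrt
  exact Finset.single_le_sum (f := fun j => ‖a j‖ ^ 2) (fun j _ => sq_nonneg _)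
    (Finset.mem_univ i)

lemma phi_abs_le (a b : EV) : |phi a b| ≤ ‖a‖ * ‖b‖ := by
  have h1 : |a 1| * |b 0| ≤ ‖a‖ * ‖b‖ :=
    mul_le_mul (abs_coord_le_norm a 1) (abs_coord_le_norm b 0) (abs_nonneg _) (norm_nonneg _)
  have h2 : |a 0| * |b 1| ≤ ‖a‖ * ‖b‖ :=
    mul_le_mul (abs_coord_le_norm a 0) (abs_coord_le_norm b 1) (abs_nonneg _) (norm_nonneg _)
  have h3 : |a 1 * b 0 - a 0 * b 1| ≤ |a 1| * |b 0| + |a 0| * |b 1| := by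
    calc |a 1 * b 0 - a 0 * b 1| ≤ |a 1 * b 0| + |a 0 * b 1| := abs_sub _ _
      _ = |a 1| * |b 0| + |a 0| * |b 1| := by rw [abs_mul, abs_mul]
  have : |phi a b| = |a 1 * b 0 - a 0 * b 1| / 2 := by
    rw [phi, abs_div]; norm_num
  rw [this]; linarith

lemma telescope : ∀ (n : ℕ) (g : Fin (n + 1) → ℝ),
    ∑ k : Fin n, (g k.succ - g k.castSucc) = g (Fin.last n) - g 0 := by
  intro n
  induction n with
  | zero => intro g; simp [Fin.last]
  | succ n ih =>
    intro g
    rw [Fin.sum_univ_castSucc]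
    have h := ih (fun j => g j.castSucc)
    simp only [Fin.succ_castSucc]
    rw [h, Fin.succ_last]
    have h0 : ((0 : Fin (n+1)).castSucc : Fin (n+2)) = 0 := rfl
    rw [h0]; ring

lemma phi_swap (a b : EV) : phi a b = - phi b a := by simp only [phi]; ring

lemma fln_eq (n : ℕ) (x : EV) (y : Fin (n + 1) → EV) :
    fln n x y = ∑ k : Fin n, phi (y k.castSucc - x) (y k.succ - x) := by
  have key : ∀ k : Fin n, phi (y k.castSucc - x) (y k.succ - x) =
      phi (y k.castSucc) (y k.succ)
        + ((fun j => phi (y j) x) k.succ - (fun j => phi (y j) x) k.castSucc) := by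
    intro k
    simp only [phi, PiLp.sub_apply]
    ring
  rw [Finset.sum_congr rfl fun k _ => key k, Finset.sum_add_distrib,
    telescope n (fun j => phi (y j) x)]
  simp only [fln]
  have : phi x (y 0) = - phi (y 0) x := phi_swap x (y 0)
  rw [this]; ring
def mchain : (k : ℕ) → EV → (Fin k → EV) → ℝ
  | 0, _, _ => 0
  | (k+1), x, y => ‖x - y 0‖ + mchain k (y 0) (fun j => y j.succ)

lemma mchain_nonneg : ∀ (k : ℕ) (x : EV) (y : Fin k → EV), 0 ≤ mchain k x y := by
  intro k
  induction k with
  | zero => intro x y; simp [mchain]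
  | succ k ih => intro x y
                 have := ih (y 0) (fun j => y j.succ)
                 have := norm_nonneg (x - y 0)
                 simp only [mchain]; linarith

lemma mchain_succ_eq : ∀ (k : ℕ) (x : EV) (y : Fin (k + 1) → EV),
    mchain (k + 1) x y = ‖x - y 0‖ + ∑ j : Fin k, ‖y j.castSucc - y j.succ‖ := by
  intro k
  induction k with
  | zero => intro x y; simp [mchain]
  | succ k ih =>
    intro x y
    show ‖x - y 0‖ + mchain (k + 1) (y 0) (fun j => y j.succ) = _
    rw [ih (y 0) (fun j => y j.succ)]
    rw [Fin.sum_univ_succ (f := fun j : Fin (k + 1) => ‖y j.castSucc - y j.succ‖)]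
    simp only [Fin.succ_castSucc]
    have h0 : ((0 : Fin (k+1)).castSucc : Fin (k+2)) = 0 := rfl
    rw [h0]

lemma norm_le_mchain : ∀ (k : ℕ) (x : EV) (y : Fin k → EV) (j : Fin k),
    ‖y j - x‖ ≤ mchain k x y := by
  intro k
  induction k with
  | zero => intro _ _ j; exact j.elim0
  | succ k ih =>
    intro x y j
    have hnn := mchain_nonneg k (y 0) (fun j => y j.succ)
    refine Fin.cases ?_ ?_ j
    · show ‖y 0 - x‖ ≤ ‖x - y 0‖ + mchain k (y 0) (fun j => y j.succ)
      rw [norm_sub_rev]; linarith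
    · intro i
      show ‖y i.succ - x‖ ≤ ‖x - y 0‖ + mchain k (y 0) (fun j => y j.succ)
      have h1 : ‖y i.succ - x‖ ≤ ‖y i.succ - y 0‖ + ‖y 0 - x‖ := by
        have := norm_add_le (y i.succ - y 0) (y 0 - x)
        simpa using this
      have h2 : ‖y i.succ - y 0‖ ≤ mchain k (y 0) (fun j => y j.succ) :=
        ih (y 0) (fun j => y j.succ) i
      have h3 : ‖y 0 - x‖ = ‖x - y 0‖ := norm_sub_rev _ _
      linarith

lemma mchain_cont : ∀ k : ℕ, Continuous fun p : EV × (Fin k → EV) => mchain k p.1 p.2 := by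
  intro k
  induction k with
  | zero => exact continuous_const
  | succ k ih =>
    show Continuous fun p : EV × (Fin (k+1) → EV) =>
      ‖p.1 - p.2 0‖ + mchain k (p.2 0) (fun j => p.2 j.succ)
    have h1 : Continuous fun p : EV × (Fin (k+1) → EV) => ‖p.1 - p.2 0‖ := by fun_prop
    have h2 : Continuous fun p : EV × (Fin (k+1) → EV) =>
        ((p.2 0, fun j => p.2 j.succ) : EV × (Fin k → EV)) := by fun_prop
    exact h1.add (ih.comp h2)

lemma fln_cont (n : ℕ) : Continuous fun p : EV × (Fin (n+1) → EV) => fln n p.1 p.2 := by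
  unfold fln phi; fun_prop

lemma cube_measurableSet (L : ℝ) : MeasurableSet (cube L) := by
  have h : cube L = ⋂ i, (fun x : EV => x i) ⁻¹' (Set.Ioo (-(L/2)) (L/2)) := by
    ext x; simp [cube]
  rw [h]
  exact MeasurableSet.iInter fun i => (by fun_prop : Continuous fun x : EV => x i).measurable measurableSet_Ioo

lemma norm_le_of_mem_cube {L : ℝ} (hL : 0 < L) {x : EV} (hx : x ∈ cube L) : ‖x‖ ≤ L := by
  rw [EuclideanSpace.norm_eq]
  have hi : ∀ i, ‖x i‖ ^ 2 ≤ (L/2) ^ 2 := by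
    intro i
    have h := hx i
    rw [Set.mem_Ioo] at h
    have : |x i| ≤ L / 2 := by rw [abs_le]; constructor <;> linarith [h.1, h.2]
    rw [Real.norm_eq_abs]
    nlinarith [abs_nonneg (x i)]
  have hsum : ∑ i, ‖x i‖ ^ 2 ≤ L ^ 2 := by
    calc ∑ i, ‖x i‖ ^ 2 ≤ ∑ _i : Fin 3, (L/2) ^ 2 := Finset.sum_le_sum fun i _ => hi i
      _ = 3 * (L/2) ^ 2 := by simp [Finset.sum_const]
      _ ≤ L ^ 2 := by nlinarith
  calc Real.sqrt (∑ i, ‖x i‖ ^ 2) ≤ Real.sqrt (L ^ 2) := Real.sqrt_le_sqrt hsum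
    _ = L := Real.sqrt_sq hL.le

lemma volume_cube {L : ℝ} (hL : 0 < L) : volume (cube L) = ENNReal.ofReal L ^ 3 := by
  have hset : cube L = (MeasurableEquiv.toLp 2 (Fin 3 → ℝ)).symm ⁻¹'
      (Set.pi Set.univ fun _ : Fin 3 => Set.Ioo (-(L/2)) (L/2)) := by
    ext x
    simp [cube, Set.mem_pi]
  rw [hset, MeasurePreserving.measure_preimage
    (EuclideanSpace.volume_preserving_symm_measurableEquiv_toLp (Fin 3))
    ((MeasurableSet.univ_pi fun _ => measurableSet_Ioo).nullMeasurableSet)]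
  rw [volume_pi_pi]
  have : volume (Set.Ioo (-(L/2)) (L/2)) = ENNReal.ofReal L := by
    rw [Real.volume_Ioo]; norm_num
  simp [this]
lemma exp_integrable {β : ℝ} (hβ : 0 < β) :
    Integrable (fun z : EV => Real.exp (-β * ‖z‖)) := by
  have h4 : ((Module.finrank ℝ EV : ℝ)) < 4 := by
    simp [finrank_euclideanSpace]; norm_num
  have hs : 0 < β / 4 := by linarith
  refine ((integrable_one_add_norm (E := EV) (μ := volume) h4).const_mul
    ((1 + 1/(β/4)) ^ 4)).mono' ?_ ?_
  · exact (Real.continuous_exp.comp (continuous_const.mul continuous_norm)).aestronglyMeasurable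
  · refine Filter.Eventually.of_forall fun z => ?_
    rw [Real.norm_eq_abs, abs_of_pos (Real.exp_pos _)]
    set s := β / 4 with hsdef
    set tt := ‖z‖ with htt
    have htt0 : 0 ≤ tt := norm_nonneg z
    have e1 : Real.exp (-s * tt) ≤ 1 := by
      rw [← Real.exp_zero]
      exact Real.exp_le_exp.mpr (by nlinarith)
    have e2 : tt * Real.exp (-s * tt) ≤ 1 / s := by
      have h3 : s * tt ≤ Real.exp (s * tt) := by
        nlinarith [Real.add_one_le_exp (s * tt)]
      have h5 : Real.exp (-s * tt) = (Real.exp (s * tt))⁻¹ := by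
        rw [← Real.exp_neg]; ring_nf
      have hexp := Real.exp_pos (s * tt)
      rw [h5, inv_eq_one_div, mul_one_div, div_le_div_iff₀ hexp hs]
      nlinarith [h3]
    have key : (1 + tt) ^ 4 * Real.exp (-β * tt) ≤ (1 + 1/s) ^ 4 := by
      have hexp4 : Real.exp (-β * tt) = (Real.exp (-s * tt)) ^ 4 := by
        rw [← Real.exp_nat_mul]
        congr 1
        rw [hsdef]; ring
      have h2 : (1 + tt) * Real.exp (-s * tt) ≤ 1 + 1/s := by nlinarith
      have hnn : 0 ≤ (1 + tt) * Real.exp (-s * tt) := by positivity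
      calc (1 + tt) ^ 4 * Real.exp (-β * tt) = ((1 + tt) * Real.exp (-s * tt)) ^ 4 := by
            rw [hexp4]; ring
        _ ≤ (1 + 1/s) ^ 4 := by
            exact pow_le_pow_left₀ hnn h2 4
    have hp : (0:ℝ) < (1 + tt) ^ 4 := by positivity
    have hrpow : (1 + tt) ^ (-(4:ℝ)) = ((1 + tt) ^ (4:ℕ))⁻¹ := by
      rw [← Real.rpow_natCast (1 + tt) 4, ← Real.rpow_neg (by positivity)]
      norm_num
    rw [hrpow, ← div_eq_mul_inv, le_div_iff₀ hp]
    nlinarith [key]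

def Jl (β : ℝ) : ℝ≥0∞ := ∫⁻ z : EV, ENNReal.ofReal (Real.exp (-β * ‖z‖))

lemma Jl_ne_top {β : ℝ} (hβ : 0 < β) : Jl β ≠ ⊤ :=
  (exp_integrable hβ).lintegral_lt_top.ne

lemma lintegral_exp_mchain {β : ℝ} (hβ : 0 < β) :
    ∀ (k : ℕ) (x : EV),
      ∫⁻ y : Fin k → EV, ENNReal.ofReal (Real.exp (-β * mchain k x y)) = (Jl β) ^ k := by
  intro k
  induction k with
  | zero =>
    intro x
    simp only [mchain, mul_zero, Real.exp_zero, ENNReal.ofReal_one, lintegral_const, one_mul,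
      pow_zero]
    rw [MeasureTheory.volume_pi, Measure.pi_univ]
    norm_num
  | succ k ih =>
    intro x
    have mp := measurePreserving_piFinSuccAbove (fun _ : Fin (k+1) => (volume : Measure EV)) 0
    have hcont : Continuous fun p : EV × (Fin k → EV) =>
        ENNReal.ofReal (Real.exp (-β * (‖x - p.1‖ + mchain k p.1 p.2))) := by
      apply ENNReal.continuous_ofReal.comp
      apply Real.continuous_exp.comp
      apply Continuous.mul continuous_const
      exact ((continuous_const.sub continuous_fst).norm).add (mchain_cont k)
    have hmeas := hcont.measurable
    have step1 : ∫⁻ y : Fin (k+1) → EV, ENNReal.ofReal (Real.exp (-β * mchain (k+1) x y))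
        = ∫⁻ p : EV × (Fin k → EV),
            ENNReal.ofReal (Real.exp (-β * (‖x - p.1‖ + mchain k p.1 p.2)))
            ∂((volume : Measure EV).prod (Measure.pi fun _ : Fin k => (volume : Measure EV))) := by
      rw [MeasureTheory.volume_pi]
      rw [← mp.lintegral_comp hmeas]
      apply lintegral_congr
      intro y
      have harg : mchain (k+1) x y
          = ‖x - y 0‖ + mchain k (y 0) (fun j => y ((0:Fin (k+1)).succAbove j)) := by
        simp only [Fin.zero_succAbove]
        rfl
      show ENNReal.ofReal (Real.exp (-β * mchain (k+1) x y)) = _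
      rw [harg]
      rfl
    rw [step1]
    rw [lintegral_prod _ hmeas.aemeasurable]
    have inner : ∀ z : EV, (∫⁻ w : Fin k → EV,
        ENNReal.ofReal (Real.exp (-β * (‖x - z‖ + mchain k z w)))
          ∂(Measure.pi fun _ : Fin k => (volume : Measure EV)))
        = ENNReal.ofReal (Real.exp (-β * ‖x - z‖)) * (Jl β) ^ k := by
      intro z
      have hsplit : ∀ w : Fin k → EV,
          ENNReal.ofReal (Real.exp (-β * (‖x - z‖ + mchain k z w)))
          = ENNReal.ofReal (Real.exp (-β * ‖x - z‖)) *
            ENNReal.ofReal (Real.exp (-β * mchain k z w)) := by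
        intro w
        rw [← ENNReal.ofReal_mul (Real.exp_nonneg _), ← Real.exp_add]
        congr 2
        ring
      simp_rw [hsplit]
      rw [lintegral_const_mul' _ _ ENNReal.ofReal_ne_top]
      have := ih z
      rw [MeasureTheory.volume_pi] at this
      rw [this]
    simp_rw [inner]
    rw [lintegral_mul_const _ (by fun_prop : Measurable fun z : EV =>
      ENNReal.ofReal (Real.exp (-β * ‖x - z‖)))]
    have htrans : ∫⁻ z : EV, ENNReal.ofReal (Real.exp (-β * ‖x - z‖)) = Jl β := by
      have hrev : ∀ z : EV, ‖x - z‖ = ‖z - x‖ := fun z => norm_sub_rev _ _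
      simp_rw [hrev]
      exact lintegral_sub_right_eq_self
        (fun z : EV => ENNReal.ofReal (Real.exp (-β * ‖z‖))) x
    rw [htrans, pow_succ, mul_comm]
lemma factorial_bound {β : ℝ} (hβ : 0 < β) (j : ℕ) {S : ℝ} (hS : 0 ≤ S) :
    S ^ j * Real.exp (-(2 * β) * S) ≤ (j.factorial : ℝ) * (1 / β) ^ j * Real.exp (-β * S) := by
  have h1 : (β * S) ^ j / (j.factorial : ℝ) ≤ Real.exp (β * S) := by
    refine le_trans ?_ (Real.sum_le_exp_of_nonneg (by positivity) (j + 1))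
    exact Finset.single_le_sum (f := fun i => (β * S) ^ i / (i.factorial : ℝ))
      (fun i _ => by positivity) (Finset.mem_range.mpr (Nat.lt_succ_self j))
  have hfac : (0:ℝ) < (j.factorial : ℝ) := by
    exact_mod_cast j.factorial_pos
  rw [div_le_iff₀ hfac] at h1
  have hβj : (0:ℝ) < β ^ j := pow_pos hβ j
  have hinv : ((1:ℝ) / β) ^ j * β ^ j = 1 := by
    rw [← mul_pow]
    field_simp
    simp
  have h2 : S ^ j ≤ (j.factorial : ℝ) * (1 / β) ^ j * Real.exp (β * S) := by
    have h1' : β ^ j * S ^ j ≤ Real.exp (β * S) * (j.factorial : ℝ) := by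
      rw [← mul_pow]; exact h1
    have := mul_le_mul_of_nonneg_left h1' (by positivity : (0:ℝ) ≤ (1 / β) ^ j)
    calc S ^ j = (1 / β) ^ j * (β ^ j * S ^ j) := by
          rw [← mul_assoc, hinv, one_mul]
      _ ≤ (1 / β) ^ j * (Real.exp (β * S) * (j.factorial : ℝ)) := this
      _ = (j.factorial : ℝ) * (1 / β) ^ j * Real.exp (β * S) := by ring
  have h3 := mul_le_mul_of_nonneg_right h2 (Real.exp_pos (-(2 * β) * S)).le
  calc S ^ j * Real.exp (-(2 * β) * S)
      ≤ ((j.factorial : ℝ) * (1 / β) ^ j * Real.exp (β * S)) * Real.exp (-(2 * β) * S) := h3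
    _ = (j.factorial : ℝ) * (1 / β) ^ j * Real.exp (-β * S) := by
        rw [mul_assoc, ← Real.exp_add]
        congr 2
        ring

lemma fln_abs_le (n : ℕ) (x : EV) (y : Fin (n + 1) → EV) :
    |fln n x y| ≤ (n : ℝ) * (mchain (n + 1) x y) ^ 2 := by
  have hS0 : 0 ≤ mchain (n + 1) x y := mchain_nonneg _ _ _
  rw [fln_eq]
  calc |∑ k : Fin n, phi (y k.castSucc - x) (y k.succ - x)|
      ≤ ∑ k : Fin n, |phi (y k.castSucc - x) (y k.succ - x)| :=
        Finset.abs_sum_le_sum_abs _ _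
    _ ≤ ∑ _k : Fin n, mchain (n + 1) x y * mchain (n + 1) x y := by
        refine Finset.sum_le_sum fun k _ => ?_
        refine (phi_abs_le _ _).trans ?_
        exact mul_le_mul (norm_le_mchain (n+1) x y k.castSucc)
          (norm_le_mchain (n+1) x y k.succ) (norm_nonneg _) hS0
    _ = (n : ℝ) * (mchain (n + 1) x y) ^ 2 := by
        rw [Finset.sum_const, Finset.card_univ, Fintype.card_fin, nsmul_eq_mul]
        ring

lemma kernel_bound {C α L : ℝ} (hC : 0 < C) (hα : 0 < α) (n : ℕ)
    (t : Fin (n + 2) → EV → EV → ℂ)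
    (hbound : ∀ i, ∀ x ∈ cube L, ∀ x' ∈ cube L, ‖t i x x'‖ ≤ C * Real.exp (-α * ‖x - x'‖))
    (x : EV) (y : Fin (n + 1) → EV) (hx : x ∈ cube L) (hy : ∀ j, y j ∈ cube L) :
    ‖kernelProd n t x y‖ ≤ C ^ (n + 2) * Real.exp (-α * mchain (n + 1) x y) := by
  have h0 : ‖t 0 x (y 0)‖ ≤ C * Real.exp (-α * ‖x - y 0‖) := hbound 0 x hx (y 0) (hy 0)
  have hmid : ‖∏ k : Fin n, t k.succ.castSucc (y k.castSucc) (y k.succ)‖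
      ≤ C ^ n * Real.exp (-α * ∑ k : Fin n, ‖y k.castSucc - y k.succ‖) := by
    rw [norm_prod]
    calc ∏ k : Fin n, ‖t k.succ.castSucc (y k.castSucc) (y k.succ)‖
        ≤ ∏ k : Fin n, (C * Real.exp (-α * ‖y k.castSucc - y k.succ‖)) :=
          Finset.prod_le_prod (fun _ _ => norm_nonneg _)
            (fun k _ => hbound _ _ (hy _) _ (hy _))
      _ = C ^ n * Real.exp (-α * ∑ k : Fin n, ‖y k.castSucc - y k.succ‖) := by
          rw [Finset.prod_mul_distrib, Finset.prod_const, ← Real.exp_sum]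
          simp [Finset.mul_sum]
  have hexp1 : Real.exp (-α * ‖y (Fin.last n) - x‖) ≤ 1 := by
    rw [← Real.exp_zero]
    refine Real.exp_le_exp.mpr ?_
    have := norm_nonneg (y (Fin.last n) - x)
    nlinarith
  have hlast : ‖t (Fin.last (n + 1)) (y (Fin.last n)) x‖ ≤ C := by
    refine (hbound _ _ (hy _) x hx).trans ?_
    nlinarith
  calc ‖kernelProd n t x y‖
      = ‖t 0 x (y 0)‖ * ‖∏ k : Fin n, t k.succ.castSucc (y k.castSucc) (y k.succ)‖ *
        ‖t (Fin.last (n + 1)) (y (Fin.last n)) x‖ := by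
        rw [kernelProd, norm_mul, norm_mul]
    _ ≤ (C * Real.exp (-α * ‖x - y 0‖)) *
        (C ^ n * Real.exp (-α * ∑ k : Fin n, ‖y k.castSucc - y k.succ‖)) * C := by
        refine mul_le_mul (mul_le_mul h0 hmid (norm_nonneg _) (by positivity)) hlast
          (norm_nonneg _) (by positivity)
    _ = C ^ (n + 2) * (Real.exp (-α * ‖x - y 0‖) *
          Real.exp (-α * ∑ k : Fin n, ‖y k.castSucc - y k.succ‖)) := by ring
    _ = C ^ (n + 2) * Real.exp (-α * (‖x - y 0‖ + ∑ k : Fin n, ‖y k.castSucc - y k.succ‖)) := by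
        rw [← Real.exp_add]
        congr 2
        ring
    _ = C ^ (n + 2) * Real.exp (-α * mchain (n + 1) x y) := by
        rw [mchain_succ_eq]

lemma kernel_meas (n : ℕ) (t : Fin (n + 2) → EV → EV → ℂ)
    (hmeas : ∀ i, Measurable (Function.uncurry (t i))) :
    Measurable fun p : EV × (Fin (n + 1) → EV) => kernelProd n t p.1 p.2 := by
  unfold kernelProd
  refine Measurable.mul (Measurable.mul ?_ ?_) ?_
  · exact (hmeas 0).comp (measurable_fst.prodMk ((measurable_pi_apply 0).comp measurable_snd))
  · refine Finset.measurable_prod _ fun k _ => ?_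
    have hp : Measurable fun p : EV × (Fin (n + 1) → EV) =>
        ((p.2 k.castSucc, p.2 k.succ) : EV × EV) :=
      ((measurable_pi_apply k.castSucc).comp measurable_snd).prodMk
        ((measurable_pi_apply k.succ).comp measurable_snd)
    exact (hmeas k.succ.castSucc).comp hp
  · have hp : Measurable fun p : EV × (Fin (n + 1) → EV) =>
        ((p.2 (Fin.last n), p.1) : EV × EV) :=
      ((measurable_pi_apply (Fin.last n)).comp measurable_snd).prodMk measurable_fst
    exact (hmeas (Fin.last (n + 1))).comp hp

lemma integrand_hasDerivAt (m : ℕ) (f : ℝ) (k : ℂ) (w : ℂ) :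
    HasDerivAt (fun w : ℂ => (Complex.I * (f:ℂ)) ^ m * Complex.exp (Complex.I * w * (f:ℂ)) * k)
      ((Complex.I * (f:ℂ)) ^ (m+1) * Complex.exp (Complex.I * w * (f:ℂ)) * k) w := by
  have harg : ∀ w : ℂ, Complex.I * w * (f:ℂ) = (Complex.I * (f:ℂ)) * w := fun w => by ring
  have h0 : HasDerivAt (fun w : ℂ => (Complex.I * (f:ℂ)) * w) (Complex.I * (f:ℂ)) w := by
    simpa using (hasDerivAt_id w).const_mul (Complex.I * (f:ℂ))
  have h1 : HasDerivAt (fun w : ℂ => Complex.exp ((Complex.I * (f:ℂ)) * w))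
      (Complex.exp ((Complex.I * (f:ℂ)) * w) * (Complex.I * (f:ℂ))) w := by
    exact (Complex.hasDerivAt_exp ((Complex.I * (f:ℂ)) * w)).comp w h0
  have h2 := (h1.const_mul ((Complex.I * (f:ℂ)) ^ m)).mul_const k
  have heq : (fun w : ℂ => (Complex.I * (f:ℂ)) ^ m *
      Complex.exp (Complex.I * w * (f:ℂ)) * k)
      = fun w : ℂ => (Complex.I * (f:ℂ)) ^ m * Complex.exp ((Complex.I * (f:ℂ)) * w) * k := by
    funext w; rw [harg]
  rw [heq, harg]
  convert h2 using 1
  · rfl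
  · rfl
  ring

lemma gc_norm (n : ℕ) (t : Fin (n + 2) → EV → EV → ℂ) (m : ℕ) (w : ℂ)
    (z : EV × (Fin (n + 1) → EV)) :
    ‖(Complex.I * (fln n z.1 z.2 : ℝ)) ^ m *
        Complex.exp (Complex.I * w * (fln n z.1 z.2 : ℝ)) * kernelProd n t z.1 z.2‖
      = |fln n z.1 z.2| ^ m * Real.exp (-(w.im) * fln n z.1 z.2) *
        ‖kernelProd n t z.1 z.2‖ := by
  rw [norm_mul, norm_mul, norm_pow]
  have h1 : ‖Complex.I * ((fln n z.1 z.2 : ℝ) : ℂ)‖ = |fln n z.1 z.2| := by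
    rw [norm_mul, Complex.norm_I, one_mul, Complex.norm_real, Real.norm_eq_abs]
  have h2 : ‖Complex.exp (Complex.I * w * ((fln n z.1 z.2 : ℝ) : ℂ))‖
      = Real.exp (-(w.im) * fln n z.1 z.2) := by
    rw [Complex.norm_exp]
    congr 1
    simp [Complex.mul_re, Complex.mul_im]
    try ring
  rw [h1, h2]
def Abnd (C α : ℝ) (n m : ℕ) : ℝ :=
  C ^ (n + 2) * (n : ℝ) ^ m * (((2 * m).factorial : ℕ) : ℝ) * (1 / (α / 2)) ^ (2 * m)

lemma Abnd_nonneg {C α : ℝ} (hC : 0 ≤ C) (hα : 0 < α) (n m : ℕ) : 0 ≤ Abnd C α n m := by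
  unfold Abnd
  positivity

def gci (n : ℕ) (t : Fin (n + 2) → EV → EV → ℂ) (m : ℕ) (w : ℂ)
    (z : EV × (Fin (n + 1) → EV)) : ℂ :=
  (Complex.I * (fln n z.1 z.2 : ℝ)) ^ m *
    Complex.exp (Complex.I * w * (fln n z.1 z.2 : ℝ)) * kernelProd n t z.1 z.2

def Gci (L : ℝ) (n : ℕ) (t : Fin (n + 2) → EV → EV → ℂ) (m : ℕ) (w : ℂ) : ℂ :=
  ∫ z, gci n t m w z
    ∂((volume.restrict (cube L)).prod
      (volume.restrict (Set.pi Set.univ fun _ : Fin (n + 1) => cube L)))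

lemma fln_cube_bound {L : ℝ} (hL : 0 < L) (n : ℕ) (x : EV) (y : Fin (n + 1) → EV)
    (hx : x ∈ cube L) (hy : ∀ j, y j ∈ cube L) :
    |fln n x y| ≤ ((n : ℝ) + 2) * L ^ 2 := by
  have hb : ∀ a b : EV, a ∈ cube L → b ∈ cube L → |phi a b| ≤ L ^ 2 := by
    intro a b ha hb
    refine (phi_abs_le a b).trans ?_
    have h1 := norm_le_of_mem_cube hL ha
    have h2 := norm_le_of_mem_cube hL hb
    nlinarith [norm_nonneg a, norm_nonneg b]
  have h1 : |∑ k : Fin n, phi (y k.castSucc) (y k.succ)| ≤ (n : ℝ) * L ^ 2 := by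
    refine (Finset.abs_sum_le_sum_abs _ _).trans ?_
    calc ∑ k : Fin n, |phi (y k.castSucc) (y k.succ)|
        ≤ ∑ _k : Fin n, L ^ 2 := Finset.sum_le_sum fun k _ => hb _ _ (hy _) (hy _)
      _ = (n : ℝ) * L ^ 2 := by
          rw [Finset.sum_const, Finset.card_univ, Fintype.card_fin, nsmul_eq_mul]
  have h2 := hb x (y 0) hx (hy 0)
  have h3 := hb (y (Fin.last n)) x (hy _) hx
  have h4 : |fln n x y| ≤ |phi x (y 0)| + |∑ k : Fin n, phi (y k.castSucc) (y k.succ)|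
      + |phi (y (Fin.last n)) x| := by
    unfold fln
    calc |phi x (y 0) + (∑ k : Fin n, phi (y k.castSucc) (y k.succ)) + phi (y (Fin.last n)) x|
        ≤ |phi x (y 0) + ∑ k : Fin n, phi (y k.castSucc) (y k.succ)| + |phi (y (Fin.last n)) x| :=
          abs_add_le _ _
      _ ≤ |phi x (y 0)| + |∑ k : Fin n, phi (y k.castSucc) (y k.succ)|
          + |phi (y (Fin.last n)) x| := by
          have := abs_add_le (phi x (y 0)) (∑ k : Fin n, phi (y k.castSucc) (y k.succ))
          linarith
  linarith

lemma g_pointwise_bound {C α L : ℝ} (hC : 0 < C) (hα : 0 < α) (n : ℕ)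
    (t : Fin (n + 2) → EV → EV → ℂ)
    (hbound : ∀ i, ∀ x ∈ cube L, ∀ x' ∈ cube L, ‖t i x x'‖ ≤ C * Real.exp (-α * ‖x - x'‖))
    (m : ℕ) (u : ℝ) (z : EV × (Fin (n + 1) → EV))
    (hx : z.1 ∈ cube L) (hy : ∀ j, z.2 j ∈ cube L) :
    ‖gci n t m (u : ℂ) z‖ ≤ Abnd C α n m * Real.exp (-(α/2) * mchain (n + 1) z.1 z.2) := by
  have hgn : ‖gci n t m (u : ℂ) z‖ = |fln n z.1 z.2| ^ m * ‖kernelProd n t z.1 z.2‖ := by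
    show ‖(Complex.I * (fln n z.1 z.2 : ℝ)) ^ m *
      Complex.exp (Complex.I * (u:ℂ) * (fln n z.1 z.2 : ℝ)) * kernelProd n t z.1 z.2‖ = _
    rw [gc_norm n t m (u : ℂ) z]
    simp [Complex.ofReal_im]
  rw [hgn]
  have hS0 : 0 ≤ mchain (n + 1) z.1 z.2 := mchain_nonneg _ _ _
  have hkb := kernel_bound hC hα n t hbound z.1 z.2 hx hy
  have h1 : |fln n z.1 z.2| ^ m ≤ ((n : ℝ) * (mchain (n + 1) z.1 z.2) ^ 2) ^ m :=
    pow_le_pow_left₀ (abs_nonneg _) (fln_abs_le n z.1 z.2) m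
  have hae : (-(2 * (α/2)) * mchain (n + 1) z.1 z.2) = -α * mchain (n + 1) z.1 z.2 := by ring
  calc |fln n z.1 z.2| ^ m * ‖kernelProd n t z.1 z.2‖
      ≤ ((n : ℝ) * (mchain (n + 1) z.1 z.2) ^ 2) ^ m *
        (C ^ (n + 2) * Real.exp (-α * mchain (n + 1) z.1 z.2)) :=
        mul_le_mul h1 hkb (norm_nonneg _) (by positivity)
    _ = C ^ (n + 2) * (n : ℝ) ^ m * ((mchain (n + 1) z.1 z.2) ^ (2 * m) *
        Real.exp (-(2 * (α/2)) * mchain (n + 1) z.1 z.2)) := by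
        rw [hae, mul_pow, pow_mul]
        ring
    _ ≤ C ^ (n + 2) * (n : ℝ) ^ m * ((((2 * m).factorial : ℕ) : ℝ) * (1 / (α/2)) ^ (2 * m) *
        Real.exp (-(α/2) * mchain (n + 1) z.1 z.2)) := by
        refine mul_le_mul_of_nonneg_left ?_ (by positivity)
        exact factorial_bound (half_pos hα) (2 * m) hS0
    _ = Abnd C α n m * Real.exp (-(α/2) * mchain (n + 1) z.1 z.2) := by
        unfold Abnd
        ring
lemma master {C α : ℝ} (hC : 0 < C) (hα : 0 < α) (n : ℕ) {L : ℝ} (hL : 1 < L)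
    (t : Fin (n + 2) → EV → EV → ℂ)
    (hmeas : ∀ i, Measurable (Function.uncurry (t i)))
    (hbound : ∀ i, ∀ x ∈ cube L, ∀ x' ∈ cube L, ‖t i x x'‖ ≤ C * Real.exp (-α * ‖x - x'‖)) :
    ContDiff ℝ (⊤ : ℕ∞) (F L n t) ∧
    (∀ (m : ℕ) (u : ℝ), iteratedDeriv m (F L n t) u =
      ∫ x in cube L, ∫ y in Set.pi Set.univ (fun _ : Fin (n + 1) => cube L),
        (Complex.I * (fln n x y : ℝ)) ^ m *
          Complex.exp (Complex.I * (u : ℂ) * (fln n x y : ℝ)) * kernelProd n t x y) ∧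
    (∀ (m : ℕ) (u : ℝ), ‖iteratedDeriv m (F L n t) u‖ ≤
      (Abnd C α n m * ((Jl (α/2)).toReal) ^ (n + 1) + 1) * L ^ 3) := by
  have hL0 : (0:ℝ) < L := lt_trans one_pos hL
  have hΛm := cube_measurableSet L
  have hPym : MeasurableSet (Set.pi Set.univ fun _ : Fin (n+1) => cube L) :=
    MeasurableSet.univ_pi fun _ => hΛm
  set μ1 : Measure EV := volume.restrict (cube L) with hμ1
  set μ2 : Measure (Fin (n+1) → EV) :=
    volume.restrict (Set.pi Set.univ fun _ : Fin (n+1) => cube L) with hμ2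
  haveI hf1 : IsFiniteMeasure μ1 := by
    refine ⟨?_⟩
    rw [hμ1, Measure.restrict_apply_univ, volume_cube hL0]
    exact ENNReal.pow_lt_top ENNReal.ofReal_lt_top
  haveI hf2 : IsFiniteMeasure μ2 := by
    refine ⟨?_⟩
    rw [hμ2, Measure.restrict_apply_univ, volume_pi_pi]
    have h1 : ∏ _i : Fin (n+1), volume (cube L) = (ENNReal.ofReal L ^ 3) ^ (n+1) := by
      rw [volume_cube hL0, Finset.prod_const, Finset.card_univ, Fintype.card_fin]
    rw [h1]
    exact ENNReal.pow_lt_top (ENNReal.pow_lt_top ENNReal.ofReal_lt_top)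
  set ν : Measure (EV × (Fin (n+1) → EV)) := μ1.prod μ2 with hν
  haveI hfν : IsFiniteMeasure ν := by rw [hν]; infer_instance
  -- measurability of integrands
  have hgmeas : ∀ (m : ℕ) (w : ℂ), AEStronglyMeasurable (gci n t m w) ν := by
    intro m w
    refine Measurable.aestronglyMeasurable ?_
    have hf : Measurable fun z : EV × (Fin (n+1) → EV) => ((fln n z.1 z.2 : ℝ) : ℂ) :=
      Complex.measurable_ofReal.comp (fln_cont n).measurable
    have h1 : Measurable fun z : EV × (Fin (n+1) → EV) =>
        (Complex.I * ((fln n z.1 z.2 : ℝ) : ℂ)) ^ m := (measurable_const.mul hf).pow_const m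
    have h2 : Measurable fun z : EV × (Fin (n+1) → EV) =>
        Complex.exp (Complex.I * w * ((fln n z.1 z.2 : ℝ) : ℂ)) :=
      Complex.continuous_exp.measurable.comp (measurable_const.mul hf)
    exact (h1.mul h2).mul (kernel_meas n t hmeas)
  -- a.e. membership
  have hae : ∀ᵐ z ∂ν, z.1 ∈ cube L ∧ ∀ j, z.2 j ∈ cube L := by
    have hprod : ν = ((volume : Measure EV).prod
        (volume : Measure (Fin (n+1) → EV))).restrict
        ((cube L) ×ˢ (Set.pi Set.univ fun _ : Fin (n+1) => cube L)) := by
      rw [hν, hμ1, hμ2]; exact Measure.prod_restrict _ _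
    rw [hprod]
    filter_upwards [ae_restrict_mem (hΛm.prod hPym)] with z hz
    exact ⟨hz.1, fun j => hz.2 j (Set.mem_univ j)⟩
  -- pointwise bounds
  have hkC : ∀ z : EV × (Fin (n+1) → EV), z.1 ∈ cube L → (∀ j, z.2 j ∈ cube L) →
      ‖kernelProd n t z.1 z.2‖ ≤ C ^ (n + 2) := by
    intro z hx hy
    refine (kernel_bound hC hα n t hbound z.1 z.2 hx hy).trans ?_
    have h1 : Real.exp (-α * mchain (n+1) z.1 z.2) ≤ 1 := by
      rw [← Real.exp_zero]
      refine Real.exp_le_exp.mpr ?_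
      have := mchain_nonneg (n+1) z.1 z.2
      nlinarith
    nlinarith [pow_pos hC (n+2)]
  -- ball bound for complex parameter
  have hball : ∀ (m : ℕ) (w₀ : ℂ), ∀ᵐ z ∂ν, ∀ w ∈ Metric.ball w₀ 1,
      ‖gci n t m w z‖ ≤ (((n:ℝ)+2) * L^2)^m *
        Real.exp ((|w₀.im|+1) * (((n:ℝ)+2)*L^2)) * C^(n+2) := by
    intro m w₀
    filter_upwards [hae] with z hz w hw
    obtain ⟨hz1, hz2⟩ := hz
    have hfb := fln_cube_bound hL0 n z.1 z.2 hz1 hz2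
    have hgn := gc_norm n t m w z
    have hgg : ‖gci n t m w z‖ = |fln n z.1 z.2| ^ m *
        Real.exp (-(w.im) * fln n z.1 z.2) * ‖kernelProd n t z.1 z.2‖ := hgn
    rw [hgg]
    have h1 : |fln n z.1 z.2| ^ m ≤ (((n:ℝ)+2) * L^2)^m :=
      pow_le_pow_left₀ (abs_nonneg _) hfb m
    have him : |w.im| ≤ |w₀.im| + 1 := by
      rw [Metric.mem_ball, Complex.dist_eq] at hw
      have hd := Complex.abs_im_le_norm (w - w₀)
      rw [Complex.sub_im] at hd
      have := abs_sub_abs_le_abs_sub w.im w₀.im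
      linarith
    have h2 : Real.exp (-(w.im) * fln n z.1 z.2) ≤
        Real.exp ((|w₀.im|+1) * (((n:ℝ)+2)*L^2)) := by
      refine Real.exp_le_exp.mpr ?_
      have ha : -(w.im) * fln n z.1 z.2 ≤ |w.im| * |fln n z.1 z.2| := by
        calc -(w.im) * fln n z.1 z.2 ≤ |(-(w.im)) * fln n z.1 z.2| := le_abs_self _
          _ = |w.im| * |fln n z.1 z.2| := by rw [abs_mul, abs_neg]
      refine ha.trans ?_
      refine mul_le_mul him hfb (abs_nonneg _) ?_
      positivity
    have h3 := hkC z hz1 hz2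
    refine mul_le_mul (mul_le_mul h1 h2 (Real.exp_pos _).le (by positivity)) h3
      (norm_nonneg _) (by positivity)
  -- integrability
  have hInt : ∀ (m : ℕ) (w : ℂ), Integrable (gci n t m w) ν := by
    intro m w
    refine (integrable_const ((((n:ℝ)+2) * L^2)^m *
      Real.exp ((|w.im|+1) * (((n:ℝ)+2)*L^2)) * C^(n+2))).mono' (hgmeas m w) ?_
    filter_upwards [hball m w] with z h
    exact h w (Metric.mem_ball_self one_pos)
  -- differentiation under the integral sign
  have hDeriv : ∀ (m : ℕ) (w₀ : ℂ), HasDerivAt (Gci L n t m) (Gci L n t (m+1) w₀) w₀ := by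
    intro m w₀
    have H := hasDerivAt_integral_of_dominated_loc_of_deriv_le (μ := ν)
      (F := fun w z => gci n t m w z) (F' := fun w z => gci n t (m+1) w z)
      (x₀ := w₀) (bound := fun _ => (((n:ℝ)+2) * L^2)^(m+1) *
        Real.exp ((|w₀.im|+1) * (((n:ℝ)+2)*L^2)) * C^(n+2)) (s := Metric.ball w₀ 1) (Metric.ball_mem_nhds w₀ one_pos)
      (Filter.Eventually.of_forall fun w => hgmeas m w) (hInt m w₀) (hgmeas (m+1) w₀)
      (hball (m+1) w₀) (integrable_const _)
      (Filter.Eventually.of_forall fun z w _ =>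
        integrand_hasDerivAt m (fln n z.1 z.2) (kernelProd n t z.1 z.2) w)
    exact H.2
  -- F agrees with Gci 0 on the reals
  have hGci : ∀ (m : ℕ) (w : ℂ), Gci L n t m w = ∫ z, gci n t m w z ∂ν := fun m w => rfl
  have hFub : ∀ (m : ℕ) (u : ℝ), Gci L n t m (u : ℂ)
      = ∫ x, (∫ y, gci n t m (u : ℂ) (x, y) ∂μ2) ∂μ1 := by
    intro m u
    rw [hGci m (u : ℂ)]
    rw [hν]
    exact (integral_integral (f := fun x y => gci n t m (u : ℂ) (x, y)) (hInt m (u:ℂ))).symm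
  have hFeq : F L n t = fun u : ℝ => Gci L n t 0 (u : ℂ) := by
    funext u
    rw [hFub 0 u]
    show (∫ x, (∫ y,
      Complex.exp (Complex.I * (u : ℂ) * (fln n x y : ℝ)) * kernelProd n t x y ∂μ2) ∂μ1) = _
    refine integral_congr_ae (Filter.Eventually.of_forall fun x => ?_)
    refine integral_congr_ae (Filter.Eventually.of_forall fun y => ?_)
    simp [gci]
  have hIter : ∀ m : ℕ, iteratedDeriv m (F L n t) = fun u : ℝ => Gci L n t m (u : ℂ) := by
    intro m
    induction m with
    | zero => rw [iteratedDeriv_zero]; exact hFeq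
    | succ m ih =>
      rw [iteratedDeriv_succ, ih]
      funext u
      exact ((hDeriv m (u : ℂ)).comp_ofReal).deriv
  have hsmooth : ContDiff ℝ (⊤ : ℕ∞) (F L n t) := by
    rw [hFeq]
    have hdiff : Differentiable ℂ (Gci L n t 0) := fun w => (hDeriv 0 w).differentiableAt
    have h1 : ContDiff ℂ ⊤ (Gci L n t 0) := hdiff.contDiff
    have h2 : ContDiff ℝ (⊤ : ℕ∞) (Gci L n t 0) := (h1.restrict_scalars ℝ).of_le le_top
    have h3 : ContDiff ℝ (⊤ : ℕ∞) (fun u : ℝ => (u : ℂ)) := Complex.ofRealCLM.contDiff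
    exact h2.comp h3
  have hform : ∀ (m : ℕ) (u : ℝ), iteratedDeriv m (F L n t) u =
      ∫ x in cube L, ∫ y in Set.pi Set.univ (fun _ : Fin (n + 1) => cube L),
        (Complex.I * (fln n x y : ℝ)) ^ m *
          Complex.exp (Complex.I * (u : ℂ) * (fln n x y : ℝ)) * kernelProd n t x y := by
    intro m u
    rw [hIter m]
    show Gci L n t m (u : ℂ) = _
    rw [hFub m u]
    refine integral_congr_ae (Filter.Eventually.of_forall fun x => ?_)
    refine integral_congr_ae (Filter.Eventually.of_forall fun y => ?_)
    simp [gci]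
  refine ⟨hsmooth, hform, ?_⟩
  -- the uniform bound
  intro m u
  rw [hIter m]
  show ‖Gci L n t m (u : ℂ)‖ ≤ _
  have hAb : 0 ≤ Abnd C α n m := Abnd_nonneg hC.le hα n m
  have hJr0 : 0 ≤ (Jl (α/2)).toReal := ENNReal.toReal_nonneg
  have h1 : ‖Gci L n t m (u : ℂ)‖
      ≤ (∫⁻ z, ENNReal.ofReal ‖gci n t m (u : ℂ) z‖ ∂ν).toReal := by
    rw [hGci]
    exact norm_integral_le_lintegral_norm _
  have hstep1 : (∫⁻ z, ENNReal.ofReal ‖gci n t m (u : ℂ) z‖ ∂ν) ≤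
      ∫⁻ z, ENNReal.ofReal (Abnd C α n m *
        Real.exp (-(α/2) * mchain (n+1) z.1 z.2)) ∂ν := by
    refine lintegral_mono_ae ?_
    filter_upwards [hae] with z hz
    exact ENNReal.ofReal_le_ofReal
      (g_pointwise_bound hC hα n t hbound m u z hz.1 hz.2)
  have hBmeas : Measurable fun z : EV × (Fin (n+1) → EV) =>
      ENNReal.ofReal (Abnd C α n m * Real.exp (-(α/2) * mchain (n+1) z.1 z.2)) := by
    refine ENNReal.measurable_ofReal.comp ?_
    refine Measurable.const_mul ?_ _
    exact (Real.continuous_exp.comp (continuous_const.mul (mchain_cont (n+1)))).measurable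
  have hstep2 : (∫⁻ z, ENNReal.ofReal (Abnd C α n m *
        Real.exp (-(α/2) * mchain (n+1) z.1 z.2)) ∂ν)
      = ∫⁻ x, (∫⁻ y, ENNReal.ofReal (Abnd C α n m *
          Real.exp (-(α/2) * mchain (n+1) x y)) ∂μ2) ∂μ1 := by
    rw [hν]
    exact lintegral_prod _ hBmeas.aemeasurable
  have hinner : ∀ x : EV, (∫⁻ y, ENNReal.ofReal (Abnd C α n m *
        Real.exp (-(α/2) * mchain (n+1) x y)) ∂μ2)
      ≤ ENNReal.ofReal (Abnd C α n m) * (Jl (α/2)) ^ (n+1) := by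
    intro x
    have hle : (∫⁻ y, ENNReal.ofReal (Abnd C α n m *
        Real.exp (-(α/2) * mchain (n+1) x y)) ∂μ2)
        ≤ ∫⁻ y : Fin (n+1) → EV, ENNReal.ofReal (Abnd C α n m *
            Real.exp (-(α/2) * mchain (n+1) x y)) := by
      rw [hμ2]
      exact setLIntegral_le_lintegral _ _
    refine hle.trans ?_
    have hsplit : ∀ y : Fin (n+1) → EV, ENNReal.ofReal (Abnd C α n m *
        Real.exp (-(α/2) * mchain (n+1) x y))
        = ENNReal.ofReal (Abnd C α n m) *
          ENNReal.ofReal (Real.exp (-(α/2) * mchain (n+1) x y)) := fun y =>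
      ENNReal.ofReal_mul hAb
    simp_rw [hsplit]
    rw [lintegral_const_mul' _ _ ENNReal.ofReal_ne_top]
    rw [lintegral_exp_mchain (half_pos hα) (n+1) x]
  have htot : (∫⁻ z, ENNReal.ofReal ‖gci n t m (u : ℂ) z‖ ∂ν)
      ≤ ENNReal.ofReal (Abnd C α n m) * (Jl (α/2)) ^ (n+1) * ENNReal.ofReal L ^ 3 := by
    refine hstep1.trans ?_
    rw [hstep2]
    calc (∫⁻ x, (∫⁻ y, ENNReal.ofReal (Abnd C α n m *
          Real.exp (-(α/2) * mchain (n+1) x y)) ∂μ2) ∂μ1)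
        ≤ ∫⁻ _x, (ENNReal.ofReal (Abnd C α n m) * (Jl (α/2)) ^ (n+1)) ∂μ1 :=
          lintegral_mono fun x => hinner x
      _ = (ENNReal.ofReal (Abnd C α n m) * (Jl (α/2)) ^ (n+1)) * μ1 Set.univ :=
          lintegral_const _
      _ = ENNReal.ofReal (Abnd C α n m) * (Jl (α/2)) ^ (n+1) * ENNReal.ofReal L ^ 3 := by
          rw [hμ1, Measure.restrict_apply_univ, volume_cube hL0]
  have hJtop := Jl_ne_top (half_pos hα)
  have hfinal : ENNReal.ofReal (Abnd C α n m) * (Jl (α/2)) ^ (n+1) * ENNReal.ofReal L ^ 3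
      = ENNReal.ofReal (Abnd C α n m * ((Jl (α/2)).toReal) ^ (n+1) * L ^ 3) := by
    conv_lhs => rw [← ENNReal.ofReal_toReal hJtop]
    rw [← ENNReal.ofReal_pow ENNReal.toReal_nonneg, ← ENNReal.ofReal_pow hL0.le,
      ← ENNReal.ofReal_mul hAb, ← ENNReal.ofReal_mul (by positivity)]
  calc ‖Gci L n t m (u : ℂ)‖
      ≤ (∫⁻ z, ENNReal.ofReal ‖gci n t m (u : ℂ) z‖ ∂ν).toReal := h1
    _ ≤ (ENNReal.ofReal (Abnd C α n m * ((Jl (α/2)).toReal) ^ (n+1) * L ^ 3)).toReal := by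
        refine ENNReal.toReal_mono ENNReal.ofReal_ne_top ?_
        rw [← hfinal]
        exact htot
    _ = Abnd C α n m * ((Jl (α/2)).toReal) ^ (n+1) * L ^ 3 :=
        ENNReal.toReal_ofReal (by positivity)
    _ ≤ (Abnd C α n m * ((Jl (α/2)).toReal) ^ (n+1) + 1) * L ^ 3 := by
        nlinarith [pow_nonneg hL0.le 3, mul_nonneg hAb (pow_nonneg hJr0 (n+1))]

end FAux

/-- For kernels `t₀,…,t_{n+1}` measurable and bounded by `C e^{−α|x−x'|}` on
`Λ × Λ`, the function `F` is infinitely differentiable on `ℝ`, its `m`-th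
derivative is obtained by differentiating under the integral sign, and
`sup_u |F^{(m)}(u)| ≤ K_m L³` with `K_m` depending only on `C, α, m, n`. -/
theorem F_smooth_deriv_bound (C α : ℝ) (hC : 0 < C) (hα : 0 < α) (n : ℕ) :
    (∀ L : ℝ, 1 < L →
      ∀ t : Fin (n + 2) → EuclideanSpace ℝ (Fin 3) → EuclideanSpace ℝ (Fin 3) → ℂ,
        (∀ i, Measurable (Function.uncurry (t i))) →
        (∀ i, ∀ x ∈ cube L, ∀ x' ∈ cube L,
          ‖t i x x'‖ ≤ C * Real.exp (-α * ‖x - x'‖)) →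
        ContDiff ℝ (⊤ : ℕ∞) (F L n t) ∧
        ∀ (m : ℕ) (u : ℝ),
          iteratedDeriv m (F L n t) u =
            ∫ x in cube L, ∫ y in Set.pi Set.univ (fun _ : Fin (n + 1) => cube L),
              (Complex.I * (fln n x y : ℝ)) ^ m *
                Complex.exp (Complex.I * (u : ℂ) * (fln n x y : ℝ)) *
                kernelProd n t x y) ∧
    (∀ m : ℕ, ∃ K : ℝ, 0 < K ∧ ∀ L : ℝ, 1 < L →
      ∀ t : Fin (n + 2) → EuclideanSpace ℝ (Fin 3) → EuclideanSpace ℝ (Fin 3) → ℂ,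
        (∀ i, Measurable (Function.uncurry (t i))) →
        (∀ i, ∀ x ∈ cube L, ∀ x' ∈ cube L,
          ‖t i x x'‖ ≤ C * Real.exp (-α * ‖x - x'‖)) →
        ∀ u : ℝ, ‖iteratedDeriv m (F L n t) u‖ ≤ K * L ^ 3) := by
  constructor
  · intro L hL t h1 h2
    obtain ⟨hs, hf, _⟩ := FAux.master hC hα n hL t h1 h2
    exact ⟨hs, hf⟩
  · intro m
    refine ⟨FAux.Abnd C α n m * ((FAux.Jl (α/2)).toReal) ^ (n+1) + 1, ?_, ?_⟩
    · have h1 := FAux.Abnd_nonneg hC.le hα n m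
      have h2 : (0:ℝ) ≤ FAux.Abnd C α n m * ((FAux.Jl (α/2)).toReal) ^ (n+1) :=
        mul_nonneg h1 (pow_nonneg ENNReal.toReal_nonneg _)
      linarith
    · intro L hL t h1 h2 u
      exact (FAux.master hC hα n hL t h1 h2).2.2 m u
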